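/- For every n ≥ 1, the number of (unlabeled) biplane trees with exactly n nodes equals binomial(3n−2, n−1)/n; equivalently, n times this number equals binomial(3n−2, n−1). (This is sequence A006013 of the OEIS.) -/

import Mathlib

/-- An unlabeled biplane tree: the children of every node are organized as an ordered
pair of (possibly empty) ordered forests of biplane trees. -/
inductive BTree : Type where
  | node : List BTree → List BTree → BTree

mutual
  /-- The number of nodes of a biplane tree. -/
  def BTree.size : BTree → ℕ
    | .node fl fr => 1 + BTree.forestSize fl + BTree.forestSize fr
  /-- The total number of nodes of a forest of biplane trees. -/
  def BTree.forestSize : List BTree → ℕ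
    | [] => 0
    | t :: ts => t.size + BTree.forestSize ts
end

/-!
Record each node of a forest, in preorder, by the pair of sizes of its left and right forests of
children, and give the letter `p` the weight `p.1 + p.2 - 1`. The codes of forests of `m` trees are
exactly the words of total weight `-m` all of whose proper prefixes have weight `> -m`, and the
code determines the forest. By the cycle lemma a word of weight `-1` has exactly one rotation of
this kind, so the `n` rotations of the codes of trees with `n` nodes are all the words of length
`n` over `ℕ × ℕ` whose entries sum to `n - 1`. By stars and bars there are
`(2n + (n - 1) - 1).choose (n - 1) = (3n - 2).choose (n - 1)` of them.
-/

def IsLukasiewicz (m : ℤ) (a : List ℤ) : Prop :=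
  a.sum = -m ∧ ∀ ℓ < a.length, -m < (a.take ℓ).sum

@[simp] theorem isLukasiewicz_nil_iff {m : ℤ} : IsLukasiewicz m [] ↔ m = 0 := by
  simp [IsLukasiewicz, eq_comm]

theorem isLukasiewicz_cons_iff {m x : ℤ} {a : List ℤ} :
    IsLukasiewicz m (x :: a) ↔ 0 < m ∧ IsLukasiewicz (m + x) a := by
  simp only [IsLukasiewicz, List.sum_cons, List.length_cons, Nat.forall_lt_succ_left,
    List.take_zero, List.sum_nil, List.take_succ_cons]
  constructor
  · rintro ⟨hsum, hzero, hsucc⟩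
    exact ⟨by omega, by omega, fun ℓ hℓ => by have := hsucc ℓ hℓ; omega⟩
  · rintro ⟨hm, hsum, hprefix⟩
    exact ⟨by omega, by omega, fun ℓ hℓ => by have := hprefix ℓ hℓ; omega⟩

theorem sum_take_rotate {a : List ℤ} {k ℓ : ℕ} (hk : k ≤ a.length) (hℓ : ℓ ≤ a.length) :
    ((a.rotate k).take ℓ).sum =
      (a.take (k + ℓ)).sum - (a.take k).sum + (a.take (k + ℓ - a.length)).sum := by
  rw [List.rotate_eq_drop_append_take hk, List.take_append, List.sum_append, List.take_drop,
    List.take_take, List.length_drop, min_eq_left (by omega : ℓ - (a.length - k) ≤ k),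
    show ℓ - (a.length - k) = k + ℓ - a.length by omega]
  have := List.sum_take_add_sum_drop (a.take (k + ℓ)) k
  rw [List.take_take, min_eq_left (by omega)] at this
  omega

theorem IsLukasiewicz.eq_zero_of_rotate {a : List ℤ} (ha : IsLukasiewicz 1 a) {d : ℕ}
    (hd : d < a.length) (hrot : IsLukasiewicz 1 (a.rotate d)) : d = 0 := by
  by_contra hd0
  -- the prefix of length `d` and the complementary suffix both have nonnegative sum
  have hprefix := ha.2 d hd
  have hsuffix := hrot.2 (a.length - d) (by rw [List.length_rotate]; omega)
  rw [sum_take_rotate hd.le (by omega), show d + (a.length - d) = a.length by omega,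
    List.take_length, Nat.sub_self, List.take_zero, List.sum_nil, ha.1] at hsuffix
  omega

theorem rotate_injective_of_isLukasiewicz {a b : List ℤ} (ha : IsLukasiewicz 1 a)
    (hb : IsLukasiewicz 1 b) {i j : ℕ} (hi : i < a.length) (hj : j < b.length)
    (h : a.rotate i = b.rotate j) : i = j := by
  wlog hij : i ≤ j generalizing a b i j
  · exact (this hb ha hj hi h.symm (by omega)).symm
  have : a = b.rotate (j - i) := by
    rwa [← List.rotate_eq_rotate (n := i), List.rotate_rotate, Nat.sub_add_cancel hij]
  have hlen : a.length = b.length := by rw [this, List.length_rotate]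
  have := hb.eq_zero_of_rotate (by omega) (this ▸ ha)
  omega

theorem exists_rotate_isLukasiewicz {a : List ℤ} (h : a.sum = -1) :
    ∃ k < a.length, IsLukasiewicz 1 (a.rotate k) := by
  have hne : a ≠ [] := by rintro rfl; simp at h
  have hmin : ∃ j < a.length, ∀ i < a.length, (a.take j).sum ≤ (a.take i).sum := by
    obtain ⟨j, hj, hjmin⟩ := (Finset.range a.length).exists_min_image (fun j => (a.take j).sum)
      ⟨0, by simpa [List.length_pos_iff] using hne⟩
    exact ⟨j, by simpa using hj, fun i hi => hjmin i (by simpa)⟩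
  -- rotate to the first position where the prefix sums attain their minimum
  obtain ⟨k, hkn, hk, hk_strict⟩ : ∃ k < a.length, (∀ i < a.length,
      (a.take k).sum ≤ (a.take i).sum) ∧ ∀ i < k, (a.take k).sum < (a.take i).sum := by
    refine ⟨Nat.find hmin, (Nat.find_spec hmin).1, (Nat.find_spec hmin).2, fun i hi => ?_⟩
    have hnot := Nat.find_min hmin hi
    simp only [not_and, not_forall, not_le] at hnot
    obtain ⟨i', hi', hlt⟩ := hnot (hi.trans (Nat.find_spec hmin).1)
    have := (Nat.find_spec hmin).2 i' hi'
    omega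
  refine ⟨k, hkn, by rw [(a.rotate_perm k).sum_eq, h], fun ℓ hℓ => ?_⟩
  rw [List.length_rotate] at hℓ
  rw [sum_take_rotate hkn.le hℓ.le]
  rcases lt_or_ge (k + ℓ) a.length with hlt | hge
  · have := hk (k + ℓ) hlt
    rw [show k + ℓ - a.length = 0 by omega, List.take_zero, List.sum_nil]
    omega
  · have := hk_strict (k + ℓ - a.length) (by omega)
    rw [List.take_of_length_le hge, h]
    omega

theorem natCard_list_length_eq {α : Type*} (n : ℕ) (q : List α → Prop) :
    Nat.card {L : List α // L.length = n ∧ q L} = Nat.card {f : Fin n → α // q (List.ofFn f)} := by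
  refine (Nat.card_eq_of_bijective (fun f => ⟨List.ofFn f.1, List.length_ofFn, f.2⟩)
    ⟨fun f g h => Subtype.ext (List.ofFn_injective (congrArg Subtype.val h)), ?_⟩).symm
  rintro ⟨L, rfl, hL⟩
  exact ⟨⟨L.get, by rwa [List.ofFn_get]⟩, Subtype.ext (List.ofFn_get L)⟩

theorem natCard_pair_list_sum_eq (n s : ℕ) :
    Nat.card {L : List (ℕ × ℕ) // L.length = n ∧ (L.map fun p => p.1 + p.2).sum = s} =
      (2 * n + s - 1).choose s := by
  let e : (Fin n → ℕ × ℕ) ≃ (Fin n ⊕ Fin n → ℕ) :=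
    (Equiv.arrowProdEquivProdArrow _ _ _).trans (Equiv.sumArrowEquivProdArrow _ _ _).symm
  rw [natCard_list_length_eq, Nat.card_congr (e.subtypeEquiv fun f => ?_),
    ← Nat.card_congr (Sym.equivNatSumOfFintype _ s), Sym.natCard_sym_eq_choose]
  · simp [two_mul]
  · simp [e, List.sum_ofFn, Fintype.sum_sum_type, Finset.sum_add_distrib]

namespace BTree

theorem forestSize_append (F G : List BTree) :
    forestSize (F ++ G) = forestSize F + forestSize G := by
  induction F with
  | nil => simp [forestSize]
  | cons t ts ih => simp only [List.cons_append, forestSize, ih]; omega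

theorem forestSize_node_cons (fl fr ts : List BTree) :
    forestSize (node fl fr :: ts) = forestSize (fl ++ fr ++ ts) + 1 := by
  simp only [forestSize, size, forestSize_append]
  omega

theorem forest_induction {motive : List BTree → Prop} (nil : motive [])
    (cons : ∀ fl fr ts, motive (fl ++ fr ++ ts) → motive (node fl fr :: ts)) :
    ∀ F, motive F
  | [] => nil
  | node fl fr :: ts => cons fl fr ts (forest_induction nil cons (fl ++ fr ++ ts))
termination_by F => forestSize F
decreasing_by rw [forestSize_node_cons]; omega

def code : List BTree → List (ℕ × ℕ)
  | [] => []
  | node fl fr :: ts => (fl.length, fr.length) :: code (fl ++ fr ++ ts)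
termination_by F => forestSize F
decreasing_by rw [forestSize_node_cons]; omega

def weight (p : ℕ × ℕ) : ℤ := p.1 + p.2 - 1

theorem sum_map_weight_eq_neg_one_iff (L : List (ℕ × ℕ)) :
    (L.map weight).sum = -1 ↔ (L.map fun p => p.1 + p.2).sum + 1 = L.length := by
  have : (L.map weight).sum = (L.map fun p => p.1 + p.2).sum - L.length := by
    induction L with
    | nil => simp
    | cons p L ih =>
      simp only [List.map_cons, List.sum_cons, List.length_cons, Nat.cast_add, Nat.cast_one,
        ih, weight]
      ring
  omega

theorem length_code (F : List BTree) : (code F).length = forestSize F := by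
  induction F using forest_induction with
  | nil => simp [code, forestSize]
  | cons fl fr ts ih => rw [code, List.length_cons, ih, forestSize_node_cons]

theorem isLukasiewicz_code (F : List BTree) : IsLukasiewicz F.length ((code F).map weight) := by
  induction F using forest_induction with
  | nil => simp [code]
  | cons fl fr ts ih =>
    rw [code, List.map_cons, isLukasiewicz_cons_iff]
    refine ⟨by simp, ?_⟩
    convert ih using 1
    simp only [List.append_assoc, List.length_append, List.length_cons, Nat.cast_add,
      Nat.cast_one, weight]
    ring

theorem code_injective : Function.Injective code := by
  intro F
  induction F using forest_induction with
  | nil => rintro (_ | ⟨⟨_, _⟩, _⟩) h <;> simp_all [code]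
  | cons fl fr ts ih =>
    rintro (_ | ⟨⟨fl', fr'⟩, ts'⟩) h
    · simp [code] at h
    simp only [code, List.cons.injEq, Prod.mk.injEq] at h
    obtain ⟨⟨hl, hr⟩, hrest⟩ := h
    have hforest := ih hrest
    rw [List.append_assoc, List.append_assoc] at hforest
    obtain ⟨rfl, h'⟩ := List.append_inj hforest hl
    obtain ⟨rfl, rfl⟩ := List.append_inj h' hr
    rfl

theorem exists_code_eq {m : ℤ} {M : List (ℕ × ℕ)} (h : IsLukasiewicz m (M.map weight)) :
    ∃ F : List BTree, F.length = m ∧ code F = M := by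
  induction M generalizing m with
  | nil => exact ⟨[], by simp [isLukasiewicz_nil_iff.mp h], by simp [code]⟩
  | cons p R ih =>
    rw [List.map_cons, isLukasiewicz_cons_iff] at h
    obtain ⟨G, hG, rfl⟩ := ih h.2
    have hlen : p.1 + p.2 ≤ G.length := by simp only [weight] at hG; omega
    refine ⟨node (G.take p.1) ((G.drop p.1).take p.2) :: G.drop (p.1 + p.2), ?_, ?_⟩
    · simp only [weight, List.length_cons, List.length_drop, Nat.cast_add, Nat.cast_one] at hG ⊢
      omega
    · rw [code, List.append_assoc, ← List.drop_drop, List.take_append_drop,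
        List.take_append_drop]
      simp only [List.length_take, List.length_drop]
      congr <;> omega

theorem length_code_singleton (t : BTree) : (code [t]).length = t.size := by
  simp [length_code, forestSize]

def rotatedCode (n : ℕ) (x : {t : BTree // t.size = n} × Fin n) :
    {L : List (ℕ × ℕ) // L.length = n ∧ (L.map weight).sum = -1} :=
  ⟨(code [x.1.1]).rotate x.2, by rw [List.length_rotate, length_code_singleton, x.1.2],
    by simpa [List.map_rotate, (List.rotate_perm _ _).sum_eq] using (isLukasiewicz_code [x.1.1]).1⟩

theorem rotatedCode_bijective (n : ℕ) : Function.Bijective (rotatedCode n) := by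
  have hluk (t : BTree) : IsLukasiewicz 1 ((code [t]).map weight) := by
    simpa using isLukasiewicz_code [t]
  constructor
  · rintro ⟨⟨t, rfl⟩, i⟩ ⟨⟨t', ht'⟩, j⟩ h
    have h : (code [t]).rotate i = (code [t']).rotate j := congrArg Subtype.val h
    have hij : (i : ℕ) = j := rotate_injective_of_isLukasiewicz (hluk t) (hluk t')
      (by simp [length_code_singleton]) (by simp [length_code_singleton, ht'])
      (by rw [← List.map_rotate, ← List.map_rotate, h])
    rw [hij, List.rotate_eq_rotate] at h
    obtain rfl := List.singleton_injective (code_injective h)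
    rw [Fin.ext hij]
  · rintro ⟨L, hlen, hsum⟩
    obtain ⟨k, hk, hrot⟩ := exists_rotate_isLukasiewicz hsum
    rw [List.length_map, hlen] at hk
    rw [← List.map_rotate] at hrot
    obtain ⟨F, hF, hcode⟩ := exists_code_eq hrot
    obtain ⟨t, rfl⟩ := List.length_eq_one_iff.mp (by exact_mod_cast hF)
    have hsize : t.size = n := by rw [← length_code_singleton, hcode, List.length_rotate, hlen]
    refine ⟨(⟨t, hsize⟩, ⟨(n - k) % n, Nat.mod_lt _ (by omega)⟩), Subtype.ext ?_⟩
    change (code [t]).rotate ((n - k) % n) = L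
    rw [hcode, List.rotate_rotate, ← List.rotate_mod, hlen, Nat.add_mod_mod,
      Nat.add_sub_cancel' hk.le, Nat.mod_self, List.rotate_zero]

end BTree

theorem card_biplane_trees (n : ℕ) (hn : 1 ≤ n) :
    n * Nat.card {t : BTree // t.size = n} = Nat.choose (3 * n - 2) (n - 1) := by
  calc n * Nat.card {t : BTree // t.size = n}
      = Nat.card ({t : BTree // t.size = n} × Fin n) := by
        rw [Nat.card_prod, Nat.card_fin, mul_comm]
    _ = Nat.card {L : List (ℕ × ℕ) // L.length = n ∧ (L.map BTree.weight).sum = -1} :=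
        Nat.card_eq_of_bijective _ (BTree.rotatedCode_bijective n)
    _ = Nat.card {L : List (ℕ × ℕ) // L.length = n ∧ (L.map fun p => p.1 + p.2).sum = n - 1} :=
        Nat.card_congr <| Equiv.subtypeEquivRight fun L => by
          rw [BTree.sum_map_weight_eq_neg_one_iff]
          omega
    _ = Nat.choose (3 * n - 2) (n - 1) := by
        rw [natCard_pair_list_sum_eq]
        congr 1
        omega
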